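/- arXiv:1805.07308 — 2 statements merged into one kernel-verified Lean document; each statement's English description precedes it below -/
import Mathlib

section
/- With f₀ and f₁ as above (f₀ conjugate via φ to the unit translation on ℝ, f₁(x) = 1-x), the forward orbit of any point x ∈ (0,1) under the iterated function system {f₀, f₁} is contained in the union {f₀ʲ(x) : j ∈ ℤ} ∪ {f₀ʲ(1-x) : j ∈ ℤ}, whose set of accumulation points in [0,1] is contained in {0, 1}. In particular the forward orbit of x is not dense in [0,1]. -/
/-!
In the coordinate `t = φ⁻¹ x` the map `f₀` is the translation `t ↦ t + 1` and `f₁` is the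
reflection `t ↦ -t`, so every point of the forward orbit of `φ s` is of the form `φ (± s + j)`
with `j ∈ ℤ`. Since `φ` is a strictly increasing bijection onto `(0,1)`, each of the two sets
`φ (± s + ℤ)` meets every interval `(φ p, φ q)` in finitely many points. Hence the orbit has no
accumulation point in `(0,1)`, and a point of `(0,1)` outside the orbit is not in its closure.
-/

open Set Filter

/-- `j`-th iterate, for `j : ℤ`: iterates of `f` for `j ≥ 0`, of its inverse `g` otherwise. -/
noncomputable def zIter (f g : ℝ → ℝ) (j : ℤ) : ℝ → ℝ :=
  if 0 ≤ j then f^[j.toNat] else g^[(-j).toNat]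

/-- Apply the word `w` (symbols `false ↦ f₀`, `true ↦ f₁`) to the point `x`. -/
def applyWord (f₀ f₁ : ℝ → ℝ) (w : List Bool) (x : ℝ) : ℝ :=
  w.foldl (fun y b => if b then f₁ y else f₀ y) x

/-- Forward orbit of `x` under the IFS `{f₀, f₁}`. -/
def forwardOrbit (f₀ f₁ : ℝ → ℝ) (x : ℝ) : Set ℝ :=
  {y | ∃ w : List Bool, applyWord f₀ f₁ w x = y}

open Function Topology

def intOrbit (φ : ℝ → ℝ) (c : ℝ) : Set ℝ :=
  range fun j : ℤ => φ (c + j)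

lemma intOrbit_add_intCast (φ : ℝ → ℝ) (c : ℝ) (k : ℤ) : intOrbit φ (c + k) = intOrbit φ c := by
  ext y
  constructor <;> rintro ⟨j, rfl⟩
  exacts [⟨k + j, by push_cast; ring_nf⟩, ⟨j - k, by push_cast; ring_nf⟩]

section Conjugacy

variable {φ f g : ℝ → ℝ}

lemma iterate_apply_of_semiconj_add {a : ℝ} (h : Semiconj φ (· + a) f) (n : ℕ) (t : ℝ) :
    f^[n] (φ t) = φ (t + n * a) := by
  simpa [nsmul_eq_mul] using (h.iterate_right n t).symm

lemma zIter_apply_of_semiconj (hf : Semiconj φ (· + 1) f) (hg : Semiconj φ (· + -1) g)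
    (j : ℤ) (t : ℝ) : zIter f g j (φ t) = φ (t + j) := by
  unfold zIter
  split_ifs with hj
  · rw [iterate_apply_of_semiconj_add hf, mul_one, ← Int.cast_natCast, Int.toNat_of_nonneg hj]
  · rw [iterate_apply_of_semiconj_add hg, mul_neg_one, ← Int.cast_natCast,
      Int.toNat_of_nonneg (by omega), Int.cast_neg, neg_neg]

lemma range_zIter_eq_intOrbit (hf : Semiconj φ (· + 1) f) (hg : Semiconj φ (· + -1) g)
    (c : ℝ) : range (fun j : ℤ => zIter f g j (φ c)) = intOrbit φ c := by
  simp only [zIter_apply_of_semiconj hf hg, intOrbit]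

lemma applyWord_mem_intOrbit (hf : Semiconj φ (· + 1) f) (hg : Semiconj φ Neg.neg g)
    (w : List Bool) (t : ℝ) : applyWord f g w (φ t) ∈ intOrbit φ t ∪ intOrbit φ (-t) := by
  induction w generalizing t with
  | nil => exact Or.inl ⟨0, by simp [applyWord]⟩
  | cons b w ih =>
    cases b with
    | false =>
      have hshift : intOrbit φ (t + 1) = intOrbit φ t := by
        exact_mod_cast intOrbit_add_intCast φ t 1
      have hshift' : intOrbit φ (-(t + 1)) = intOrbit φ (-t) := by
        rw [neg_add]
        exact_mod_cast intOrbit_add_intCast φ (-t) (-1)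
      change applyWord f g w (f (φ t)) ∈ _
      simpa only [← hf t, hshift, hshift'] using ih (t + 1)
    | true =>
      change applyWord f g w (g (φ t)) ∈ _
      simpa only [← hg t, neg_neg, union_comm] using ih (-t)

lemma forwardOrbit_subset_intOrbit (hf : Semiconj φ (· + 1) f) (hg : Semiconj φ Neg.neg g)
    (t : ℝ) : forwardOrbit f g (φ t) ⊆ intOrbit φ t ∪ intOrbit φ (-t) := by
  rintro _ ⟨w, rfl⟩
  exact applyWord_mem_intOrbit hf hg w t

lemma intOrbit_inter_Ioo_finite (hφ : StrictMono φ) (c p q : ℝ) :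
    (intOrbit φ c ∩ Ioo (φ p) (φ q)).Finite := by
  refine ((finite_Icc ⌈p - c⌉ ⌊q - c⌋).image fun j : ℤ => φ (c + j)).subset ?_
  rintro _ ⟨⟨j, rfl⟩, hp, hq⟩
  have hp' := hφ.lt_iff_lt.1 hp
  have hq' := hφ.lt_iff_lt.1 hq
  exact ⟨j, ⟨Int.ceil_le.2 (by linarith), Int.le_floor.2 (by linarith)⟩, rfl⟩

end Conjugacy

lemma not_accPt_of_finite_inter_nhds {X : Type*} [TopologicalSpace X] [T1Space X]
    {S U : Set X} {y : X} (hU : U ∈ 𝓝 y) (hfin : (S ∩ U).Finite) : ¬ AccPt y (𝓟 S) := by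
  intro hacc
  have hacc' : AccPt y (𝓟 (S ∩ U)) := accPt_iff_frequently.2 <|
    ((accPt_iff_frequently.1 hacc).and_eventually hU).mono fun _ ⟨⟨hne, hS⟩, hU⟩ => ⟨hne, hS, hU⟩
  exact Set.Infinite.of_accPt hacc' hfin

theorem stmt3_general (φ ψ f₀ g₀ f₁ : ℝ → ℝ)
    (hmono : StrictMono φ)
    (hrange : range φ = Ioo (0:ℝ) 1)
    (hsym : ∀ y : ℝ, φ y = 1 - φ (-y))
    (hψφ : ∀ y : ℝ, ψ (φ y) = y)
    (hf₀ : ∀ x ∈ Ioo (0:ℝ) 1, f₀ x = φ (ψ x + 1))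
    (hg₀ : ∀ x ∈ Ioo (0:ℝ) 1, g₀ x = φ (ψ x - 1))
    (hf₁ : ∀ x, f₁ x = 1 - x) :
    ∀ x ∈ Ioo (0:ℝ) 1,
      forwardOrbit f₀ f₁ x ⊆
          ((fun j : ℤ => zIter f₀ g₀ j x) '' univ) ∪
          ((fun j : ℤ => zIter f₀ g₀ j (1 - x)) '' univ) ∧
      {y : ℝ | y ∈ Icc (0:ℝ) 1 ∧ AccPt y (𝓟 (forwardOrbit f₀ f₁ x))} ⊆ {0, 1} ∧
      ¬ (Icc (0:ℝ) 1 ⊆ closure (forwardOrbit f₀ f₁ x)) := by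
  have hφmem : ∀ t, φ t ∈ Ioo (0:ℝ) 1 := fun t => hrange ▸ mem_range_self t
  have hf₀φ : Semiconj φ (· + 1) f₀ := fun t => by rw [hf₀ _ (hφmem t), hψφ]
  have hg₀φ : Semiconj φ (· + -1) g₀ := fun t => by rw [hg₀ _ (hφmem t), hψφ, sub_eq_add_neg]
  have hf₁φ : Semiconj φ Neg.neg f₁ := fun t => by rw [hf₁, hsym (-t), neg_neg]
  rw [← hrange]
  rintro _ ⟨s, rfl⟩
  set S := forwardOrbit f₀ f₁ (φ s)
  have hS : S ⊆ intOrbit φ s ∪ intOrbit φ (-s) := forwardOrbit_subset_intOrbit hf₀φ hf₁φ s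
  have hfin : ∀ p q, (S ∩ Ioo (φ p) (φ q)).Finite := fun p q =>
    ((intOrbit_inter_Ioo_finite hmono s p q).union (intOrbit_inter_Ioo_finite hmono (-s) p q)).subset
      (union_inter_distrib_right _ _ _ ▸ inter_subset_inter_left _ hS)
  have hacc : ∀ y ∈ range φ, ¬ AccPt y (𝓟 S) := by
    rintro _ ⟨t, rfl⟩
    exact not_accPt_of_finite_inter_nhds
      (Ioo_mem_nhds (hmono (sub_one_lt t)) (hmono (lt_add_one t))) (hfin _ _)
  refine ⟨?_, fun y ⟨hy, hyS⟩ => by_contra fun hy01 => hacc y ?_ hyS, fun hdense => ?_⟩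
  · have hreflect : 1 - φ s = φ (-s) := by rw [hsym s, sub_sub_cancel]
    rw [image_univ, image_univ, hreflect, range_zIter_eq_intOrbit hf₀φ hg₀φ,
      range_zIter_eq_intOrbit hf₀φ hg₀φ]
    exact hS
  · rw [hrange, ← Icc_sdiff_both]
    exact ⟨hy, hy01⟩
  · obtain ⟨y, hy, hyS⟩ := ((Ioo_infinite (hmono zero_lt_one)).sdiff (hfin 0 1)).nonempty
    have hyrange : y ∈ range φ := hrange ▸ ⟨(hφmem 0).1.trans hy.1, hy.2.trans (hφmem 1).2⟩
    have hycl : ClusterPt y (𝓟 S) := mem_closure_iff_clusterPt.1 (hdense (Ioo_subset_Icc_self (hrange ▸ hyrange)))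
    exact hacc y hyrange ((clusterPt_principal.1 hycl).resolve_left fun h => hyS ⟨h, hy⟩)

/-- with `f₀` conjugate via `φ` to the unit translation on `ℝ` (extended by
fixing `0` and `1`), `g₀` its inverse, and `f₁ x = 1 - x`: the forward orbit of any
`x ∈ (0,1)` under the IFS `{f₀, f₁}` is contained in
`{f₀ʲ x : j ∈ ℤ} ∪ {f₀ʲ (1-x) : j ∈ ℤ}`, its accumulation points in `[0,1]` lie
in `{0, 1}`, and the orbit is not dense in `[0,1]`. -/
theorem stmt3 (φ ψ f₀ g₀ f₁ : ℝ → ℝ)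
    (hmono : StrictMono φ)
    (hrange : range φ = Ioo (0:ℝ) 1)
    (hsym : ∀ y : ℝ, φ y = 1 - φ (-y))
    (hψφ : ∀ y : ℝ, ψ (φ y) = y)
    (hφψ : ∀ x ∈ Ioo (0:ℝ) 1, φ (ψ x) = x)
    (hf₀ : ∀ x ∈ Ioo (0:ℝ) 1, f₀ x = φ (ψ x + 1))
    (hf₀0 : f₀ 0 = 0) (hf₀1 : f₀ 1 = 1)
    (hg₀ : ∀ x ∈ Ioo (0:ℝ) 1, g₀ x = φ (ψ x - 1))
    (hg₀0 : g₀ 0 = 0) (hg₀1 : g₀ 1 = 1)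
    (hf₁ : ∀ x, f₁ x = 1 - x) :
    ∀ x ∈ Ioo (0:ℝ) 1,
      forwardOrbit f₀ f₁ x ⊆
          ((fun j : ℤ => zIter f₀ g₀ j x) '' univ) ∪
          ((fun j : ℤ => zIter f₀ g₀ j (1 - x)) '' univ) ∧
      {y : ℝ | y ∈ Icc (0:ℝ) 1 ∧ AccPt y (𝓟 (forwardOrbit f₀ f₁ x))} ⊆ {0, 1} ∧
      ¬ (Icc (0:ℝ) 1 ⊆ closure (forwardOrbit f₀ f₁ x)) :=
  stmt3_general φ ψ f₀ g₀ f₁ hmono hrange hsym hψφ hf₀ hg₀ hf₁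
end

section
/- Let Π : Σ_A → Σ₂ be the map replacing each symbol i_L or i_R by i ∈ {0,1}. Let ν be an ergodic shift-invariant measure on Σ_A and define its mirror ν̄ by ν̄(C) = ν(C̄) on cylinders, where C̄ mirrors each symbol (i_L ↔ i_R). Then: (a) ν̄ is shift-invariant and Π*ν̄ = Π*ν; (b) if ν̂ is any ergodic shift-invariant measure on Σ_A with Π*ν̂ = Π*ν, then ν̂ = ν or ν̂ = ν̄. -/
/-!
On `Σ_A` the subscript of `ξ k` is determined by the subscript of `ξ 0` and the parity of the
number of `1`s of `Π ξ` between `0` and `k`. Hence `Π` is two-to-one on `Σ_A`, with fibres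
`{ξ, ξ̄}`, and reading subscripts off these parities gives a measurable map `L : Σ₂ → Σ_A` with
`L (Π ξ) ∈ {ξ, ξ̄}` on `Σ_A`. Consequently `α + ᾱ = L_*(Π_* α) + (mirror ∘ L)_*(Π_* α)` for
every measure `α` carried by `Σ_A`, so `Π_* ν̂ = Π_* ν` gives `ν̂ ≤ ν̂ + ν̂̄ = ν + ν̄`. Two ergodic
probability measures are equal or mutually singular, so `ν̂` being dominated by `ν + ν̄` forces
`ν̂ = ν` or `ν̂ = ν̄`.
-/

open Set MeasureTheory

/-- The transition matrix `A` on the alphabet `{0_L, 1_L, 0_R, 1_R}`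
(coded as `0, 1, 2, 3`). -/
def matA : Matrix (Fin 4) (Fin 4) ℕ :=
  !![1, 1, 0, 0; 0, 0, 1, 1; 0, 0, 1, 1; 1, 1, 0, 0]

/-- The subshift of finite type `Σ_A` inside the full shift on four symbols. -/
def SigmaA : Set (ℤ → Fin 4) := {ξ | ∀ k : ℤ, matA (ξ k) (ξ (k + 1)) = 1}

/-- The shift map on bi-infinite sequences of four symbols. -/
def shift4 : (ℤ → Fin 4) → (ℤ → Fin 4) := fun ξ k => ξ (k + 1)

/-- The mirror involution on symbols: `0_L ↔ 0_R`, `1_L ↔ 1_R`. -/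
def mirrorSym : Fin 4 → Fin 4 := ![2, 3, 0, 1]

/-- The mirror involution on sequences. -/
def mirrorSeq : (ℤ → Fin 4) → (ℤ → Fin 4) := fun ξ k => mirrorSym (ξ k)

/-- The factor map `Π : Σ_A → Σ₂` forgetting the `L/R` subscript:
`0_L, 0_R ↦ 0` and `1_L, 1_R ↦ 1`. -/
def projSeq : (ℤ → Fin 4) → (ℤ → Bool) := fun ξ k => ![false, true, false, true] (ξ k)

open Measure

namespace MeasureTheory.Ergodic

variable {X : Type*} [MeasurableSpace X] {f : X → X} {μ ν : Measure X}

theorem eq_or_mutuallySingular [IsProbabilityMeasure μ] [IsProbabilityMeasure ν]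
    (hμ : Ergodic f μ) (hν : Ergodic f ν) : μ = ν ∨ μ ⟂ₘ ν := by
  obtain ⟨c, hc⟩ := hν.eq_smul_of_absolutelyContinuous
    (hμ.toMeasurePreserving.withDensity_rnDeriv hν.toMeasurePreserving)
    (withDensity_absolutelyContinuous _ _)
  rcases eq_or_ne c 0 with rfl | hc₀
  · rw [zero_smul, withDensity_rnDeriv_eq_zero] at hc
    exact .inr hc
  · have hle : c • ν ≤ μ := by
      rw [← hc]
      conv_rhs => rw [← rnDeriv_add_singularPart μ ν]
      exact Measure.le_add_right le_rfl
    exact .inl (hμ.eq_of_absolutelyContinuous hν.toMeasurePreserving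
      ((absolutelyContinuous_smul hc₀).trans (absolutelyContinuous_of_le hle))).symm

theorem eq_or_eq_of_le_add {ν₁ ν₂ : Measure X} [IsProbabilityMeasure μ] [IsProbabilityMeasure ν₁]
    [IsProbabilityMeasure ν₂] (hμ : Ergodic f μ) (hν₁ : Ergodic f ν₁) (hν₂ : Ergodic f ν₂)
    (hle : μ ≤ ν₁ + ν₂) : μ = ν₁ ∨ μ = ν₂ := by
  refine (hμ.eq_or_mutuallySingular hν₁).imp_right fun h₁ ↦
    (hμ.eq_or_mutuallySingular hν₂).resolve_right fun h₂ ↦ ?_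
  have hself : μ ⟂ₘ μ := (h₁.add_right h₂).mono le_rfl hle
  exact IsProbabilityMeasure.ne_zero μ (MutuallySingular.self_iff μ |>.mp hself)

end MeasureTheory.Ergodic

namespace MeasureTheory.Measure

variable {X : Type*} [MeasurableSpace X] {μ : Measure X} {g h e : X → X} {s : Set X}

theorem map_add_map_eq_add_map (hs : MeasurableSet s) (hg : Measurable g) (hh : Measurable h)
    (he : Measurable e) (hgs : g =ᵐ[μ.restrict s] id) (hhs : h =ᵐ[μ.restrict s] e)
    (hgs' : g =ᵐ[μ.restrict sᶜ] e) (hhs' : h =ᵐ[μ.restrict sᶜ] id) :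
    μ.map g + μ.map h = μ + μ.map e := by
  have split {f : X → X} (hf : Measurable f) :
      μ.map f = (μ.restrict s).map f + (μ.restrict sᶜ).map f := by
    rw [← Measure.map_add _ _ hf, restrict_add_restrict_compl hs]
  calc μ.map g + μ.map h
      = (μ.restrict s + μ.restrict sᶜ) + ((μ.restrict s).map e + (μ.restrict sᶜ).map e) := by
        rw [split hg, split hh, map_congr hgs, map_congr hhs, map_congr hgs', map_congr hhs',
          map_id, map_id]
        abel
    _ = μ + μ.map e := by rw [restrict_add_restrict_compl hs, ← split he]

end MeasureTheory.Measure

def symBit : Fin 4 → Bool := ![false, true, false, true]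

def symSide : Fin 4 → ZMod 2 := ![0, 0, 1, 1]

def mkSym (b : Bool) (t : ZMod 2) : Fin 4 :=
  if t = 0 then (if b then 1 else 0) else (if b then 3 else 2)

noncomputable def sideParity (y : ℤ → Bool) (k : ℤ) : ZMod 2 :=
  ∑ j ∈ Finset.Ico (min k 0) (max k 0), ((y j).toNat : ZMod 2)

noncomputable def liftSeq (y : ℤ → Bool) : ℤ → Fin 4 := fun k ↦ mkSym (y k) (sideParity y k)

theorem sideParity_add_one (y : ℤ → Bool) (k : ℤ) :
    sideParity y (k + 1) = sideParity y k + (y k).toNat := by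
  rcases le_or_gt 0 k with hk | hk
  · rw [sideParity, sideParity, min_eq_right hk, max_eq_left hk,
      min_eq_right (by omega : (0 : ℤ) ≤ k + 1), max_eq_left (by omega : (0 : ℤ) ≤ k + 1),
      Finset.sum_Ico_add_eq_sum_Ico_add_one hk]
  · rw [sideParity, sideParity, min_eq_left hk.le, max_eq_right hk.le,
      min_eq_left (by omega : k + 1 ≤ 0), max_eq_right (by omega : k + 1 ≤ 0),
      ← Finset.insert_Ico_add_one_left_eq_Ico hk, Finset.sum_insert (by simp),
      add_right_comm, CharTwo.add_self_eq_zero, zero_add]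

theorem symSide_eq_of_matA {a b : Fin 4} (h : matA a b = 1) :
    symSide b = symSide a + (symBit a).toNat := by
  fin_cases a <;> fin_cases b <;> first | rfl | exact absurd h (by decide)

theorem mkSym_symBit_symSide : ∀ s : Fin 4, mkSym (symBit s) (symSide s) = s := by decide

theorem sideParity_projSeq {ξ : ℤ → Fin 4} (hξ : ξ ∈ SigmaA) (h0 : symSide (ξ 0) = 0) (k : ℤ) :
    sideParity (projSeq ξ) k = symSide (ξ k) := by
  induction k using Int.induction_on with
  | zero => simpa [sideParity] using h0.symm
  | succ i ih => rw [sideParity_add_one, ih, symSide_eq_of_matA (hξ i)]; rfl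
  | pred i ih =>
    have step := sideParity_add_one (projSeq ξ) (-i - 1)
    rw [sub_add_cancel, ih, symSide_eq_of_matA (by simpa using hξ (-i - 1))] at step
    exact (add_right_cancel step).symm

theorem liftSeq_projSeq_eq_self {ξ : ℤ → Fin 4} (hξ : ξ ∈ SigmaA) (h0 : symSide (ξ 0) = 0) :
    liftSeq (projSeq ξ) = ξ :=
  funext fun k ↦ by rw [liftSeq, sideParity_projSeq hξ h0]; exact mkSym_symBit_symSide (ξ k)

theorem matA_mirrorSym {a b : Fin 4} (h : matA a b = 1) :
    matA (mirrorSym a) (mirrorSym b) = 1 := by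
  fin_cases a <;> fin_cases b <;> first | rfl | exact absurd h (by decide)

theorem mirrorSeq_mem_SigmaA {ξ : ℤ → Fin 4} (hξ : ξ ∈ SigmaA) : mirrorSeq ξ ∈ SigmaA :=
  fun k ↦ matA_mirrorSym (hξ k)

theorem projSeq_comp_mirrorSeq : projSeq ∘ mirrorSeq = projSeq := by
  have : ∀ s : Fin 4, symBit (mirrorSym s) = symBit s := by decide
  exact funext fun ξ ↦ funext fun k ↦ this (ξ k)

theorem mirrorSeq_mirrorSeq (ξ : ℤ → Fin 4) : mirrorSeq (mirrorSeq ξ) = ξ := by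
  have : ∀ s : Fin 4, mirrorSym (mirrorSym s) = s := by decide
  exact funext fun k ↦ this (ξ k)

theorem liftSeq_projSeq_eq_mirrorSeq {ξ : ℤ → Fin 4} (hξ : ξ ∈ SigmaA) (h0 : symSide (ξ 0) ≠ 0) :
    liftSeq (projSeq ξ) = mirrorSeq ξ := by
  have hside : ∀ s : Fin 4, symSide s ≠ 0 → symSide (mirrorSym s) = 0 := by decide
  rw [← congrFun projSeq_comp_mirrorSeq ξ]
  exact liftSeq_projSeq_eq_self (mirrorSeq_mem_SigmaA hξ) (hside _ h0)

theorem measurableSet_SigmaA : MeasurableSet SigmaA := by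
  simp only [SigmaA, Set.ofPred_forall]
  exact .iInter fun k ↦ measurableSet_eq_fun (by fun_prop) measurable_const

@[fun_prop]
theorem measurable_shift4 : Measurable shift4 := by unfold shift4; fun_prop

@[fun_prop]
theorem measurable_mirrorSeq : Measurable mirrorSeq := by unfold mirrorSeq; fun_prop

@[fun_prop]
theorem measurable_projSeq : Measurable projSeq := by unfold projSeq; fun_prop

@[fun_prop]
theorem measurable_liftSeq : Measurable liftSeq := by unfold liftSeq sideParity; fun_prop

theorem add_map_mirrorSeq_eq {α : Measure (ℤ → Fin 4)} (hα : ∀ᵐ ξ ∂α, ξ ∈ SigmaA) :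
    α + α.map mirrorSeq =
      (α.map projSeq).map liftSeq + (α.map projSeq).map (mirrorSeq ∘ liftSeq) := by
  set sideL : Set (ℤ → Fin 4) := {ξ | symSide (ξ 0) = 0}
  have hL : MeasurableSet sideL := measurableSet_eq_fun (by fun_prop) measurable_const
  rw [Measure.map_map measurable_liftSeq measurable_projSeq,
    Measure.map_map (measurable_mirrorSeq.comp measurable_liftSeq) measurable_projSeq]
  have onL : ∀ᵐ ξ ∂α.restrict sideL, liftSeq (projSeq ξ) = ξ :=
    (ae_restrict_iff' hL).2 (hα.mono fun ξ hξ h0 ↦ liftSeq_projSeq_eq_self hξ h0)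
  have onR : ∀ᵐ ξ ∂α.restrict sideLᶜ, liftSeq (projSeq ξ) = mirrorSeq ξ :=
    (ae_restrict_iff' hL.compl).2 (hα.mono fun ξ hξ h0 ↦ liftSeq_projSeq_eq_mirrorSeq hξ h0)
  exact (Measure.map_add_map_eq_add_map hL (by fun_prop) (by fun_prop) measurable_mirrorSeq onL
    (onL.mono fun _ h ↦ congrArg mirrorSeq h) onR
    (onR.mono fun ξ h ↦ (congrArg mirrorSeq h).trans (mirrorSeq_mirrorSeq ξ))).symm

theorem stmt10_general (ν : Measure (ℤ → Fin 4)) [IsProbabilityMeasure ν]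
    (herg : Ergodic shift4 ν)
    (hsupp : ν SigmaA = 1) :
    (MeasurePreserving shift4 (ν.map mirrorSeq) (ν.map mirrorSeq) ∧
      (ν.map mirrorSeq).map projSeq = ν.map projSeq) ∧
    ∀ νh : Measure (ℤ → Fin 4), IsProbabilityMeasure νh →
      MeasurePreserving shift4 νh νh → Ergodic shift4 νh → νh SigmaA = 1 →
      νh.map projSeq = ν.map projSeq →
      νh = ν ∨ νh = ν.map mirrorSeq := by
  have hergM : Ergodic shift4 (ν.map mirrorSeq) :=
    (measurable_mirrorSeq.measurePreserving ν).ergodic_of_ergodic_semiconj herg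
      measurable_shift4 fun _ ↦ rfl
  refine ⟨⟨hergM.toMeasurePreserving, ?_⟩, fun νh _ _ hergh hsupph hproj ↦ ?_⟩
  · rw [Measure.map_map measurable_projSeq measurable_mirrorSeq, projSeq_comp_mirrorSeq]
  have : IsProbabilityMeasure (ν.map mirrorSeq) :=
    isProbabilityMeasure_map measurable_mirrorSeq.aemeasurable
  have hsum : νh + νh.map mirrorSeq = ν + ν.map mirrorSeq := by
    rw [add_map_mirrorSeq_eq ((mem_ae_iff_prob_eq_one measurableSet_SigmaA).2 hsupph),
      add_map_mirrorSeq_eq ((mem_ae_iff_prob_eq_one measurableSet_SigmaA).2 hsupp), hproj]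
  exact hergh.eq_or_eq_of_le_add herg hergM (hsum ▸ Measure.le_add_right le_rfl)

/-- for an ergodic shift-invariant measure `ν` on `Σ_A`, the mirror
measure `ν̄ = (mirror)_* ν` is shift-invariant with `Π_* ν̄ = Π_* ν`, and any ergodic
shift-invariant measure `ν̂` on `Σ_A` with `Π_* ν̂ = Π_* ν` equals `ν` or `ν̄`. -/
theorem stmt10 (ν : Measure (ℤ → Fin 4)) [IsProbabilityMeasure ν]
    (hinv : MeasurePreserving shift4 ν ν)
    (herg : Ergodic shift4 ν)
    (hsupp : ν SigmaA = 1) :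
    (MeasurePreserving shift4 (ν.map mirrorSeq) (ν.map mirrorSeq) ∧
      (ν.map mirrorSeq).map projSeq = ν.map projSeq) ∧
    ∀ νh : Measure (ℤ → Fin 4), IsProbabilityMeasure νh →
      MeasurePreserving shift4 νh νh → Ergodic shift4 νh → νh SigmaA = 1 →
      νh.map projSeq = ν.map projSeq →
      νh = ν ∨ νh = ν.map mirrorSeq :=
  stmt10_general ν herg hsupp
end
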